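/- Let C_1, C_2, C_3 be three pairwise vertex-disjoint cycles (each of length at least 3), and for i = 1, 2, 3 let {x_i, y_i} be an edge of C_i. Then the graph on the vertex set V(C_1) ∪ V(C_2) ∪ V(C_3) whose edge set is the symmetric difference of E(C_1) ∪ E(C_2) ∪ E(C_3) with the edge set {{x_1,y_1}, {y_1,x_2}, {x_2,y_2}, {y_2,x_3}, {x_3,y_3}, {y_3,x_1}} of the six-cycle (x_1, y_1, x_2, y_2, x_3, y_3) is a single cycle spanning V(C_1) ∪ V(C_2) ∪ V(C_3). -/
import Mathlib


/-- The edge set of the cycle with vertex sequence `v 0, v 1, …, v (n-1)`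
(indices modulo `n`). -/
def cycleEdges {V : Type*} (n : ℕ) (v : ZMod n → V) : Set (Sym2 V) :=
  {e | ∃ i : ZMod n, e = s(v i, v (i + 1))}

lemma natCast_ne_zero_zmod {n a : ℕ} (h0 : 0 < a) (h : a < n) : (a : ZMod n) ≠ 0 := by
  intro hc
  have := ZMod.val_cast_of_lt h
  rw [hc, ZMod.val_zero] at this; omega

lemma natCast_inj_zmod {n a b : ℕ} (ha : a < n) (hb : b < n)
    (h : (a : ZMod n) = (b : ZMod n)) : a = b := by
  have h1 := ZMod.val_cast_of_lt ha
  have h2 := ZMod.val_cast_of_lt hb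
  rw [h] at h1; omega

lemma cycleEdges_mem_range {V : Type*} {n : ℕ} {v : ZMod n → V} {x y : V}
    (h : s(x, y) ∈ cycleEdges n v) : x ∈ Set.range v ∧ y ∈ Set.range v := by
  obtain ⟨i, hi⟩ := h
  rw [Sym2.eq_iff] at hi
  rcases hi with ⟨h1, h2⟩ | ⟨h1, h2⟩ <;> exact ⟨⟨_, h1.symm⟩, ⟨_, h2.symm⟩⟩

lemma cycleEdges_shift {V : Type*} (n : ℕ) (v : ZMod n → V) (c : ZMod n) :
    cycleEdges n (fun j => v (c + j)) = cycleEdges n v := by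
  ext e
  constructor
  · rintro ⟨i, rfl⟩
    exact ⟨c + i, by rw [add_assoc]⟩
  · rintro ⟨i, rfl⟩
    refine ⟨i - c, ?_⟩
    have h1 : c + (i - c) = i := by ring
    have h2 : c + (i - c + 1) = i + 1 := by ring
    simp only [h1, h2]

lemma cycleEdges_reflect {V : Type*} (n : ℕ) (v : ZMod n → V) (c : ZMod n) :
    cycleEdges n (fun j => v (c - j)) = cycleEdges n v := by
  ext e
  constructor
  · rintro ⟨i, rfl⟩
    refine ⟨c - i - 1, ?_⟩
    have h1 : c - i - 1 + 1 = c - i := by ring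
    have h2 : c - (i + 1) = c - i - 1 := by ring
    simp only [h1, h2]
    exact Sym2.eq_swap
  · rintro ⟨i, rfl⟩
    refine ⟨c - i - 1, ?_⟩
    have h1 : c - (c - i - 1) = i + 1 := by ring
    have h2 : c - (c - i - 1 + 1) = i := by ring
    simp only [h1, h2]
    exact Sym2.eq_swap

lemma exists_reparam {V : Type*} {n : ℕ} {v : ZMod n → V} {x y : V}
    (h : s(x, y) ∈ cycleEdges n v) :
    ∃ v' : ZMod n → V, cycleEdges n v' = cycleEdges n v ∧
      Set.range v' = Set.range v ∧
      (Function.Injective v → Function.Injective v') ∧ v' 0 = x ∧ v' 1 = y := by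
  obtain ⟨i, hi⟩ := h
  rw [Sym2.eq_iff] at hi
  rcases hi with ⟨hx, hy⟩ | ⟨hx, hy⟩
  · refine ⟨fun j => v (i + j), cycleEdges_shift n v i, ?_, ?_, by simpa using hx.symm,
      by simpa using hy.symm⟩
    · exact Function.Surjective.range_comp (fun a => ⟨a - i, by ring⟩) v
    · exact fun hv => hv.comp (fun a b hab => by simpa using hab)
  · refine ⟨fun j => v (i + 1 - j), cycleEdges_reflect n v (i + 1), ?_, ?_,
      by simpa using hx.symm, by simpa using hy.symm⟩
    · exact Function.Surjective.range_comp (fun a => ⟨i + 1 - a, by ring⟩) v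
    · exact fun hv => hv.comp (fun a b hab => by
        have h2 : i + 1 - a = i + 1 - b := hab
        linear_combination -h2)

lemma cycle_block {V : Type*} {n : ℕ} (hn : 0 < n) (v : ZMod n → V) :
    {e : Sym2 V | ∃ m : ℕ, m + 1 < n ∧ e = s(v (-(m : ZMod n)), v (-((m + 1 : ℕ) : ZMod n)))} =
    {e : Sym2 V | ∃ k : ZMod n, k ≠ 0 ∧ e = s(v k, v (k + 1))} := by
  haveI : NeZero n := ⟨by omega⟩
  ext e
  constructor
  · rintro ⟨m, hm, rfl⟩
    refine ⟨-((m + 1 : ℕ) : ZMod n), natCast_ne_zero_zmod (by omega) hm ∘ neg_eq_zero.mp, ?_⟩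
    have h1 : -((m + 1 : ℕ) : ZMod n) + 1 = -(m : ZMod n) := by push_cast; ring
    rw [h1]
    exact Sym2.eq_swap
  · rintro ⟨k, hk, rfl⟩
    have hpos : 0 < (-k).val := ZMod.val_pos.mpr (neg_ne_zero.mpr hk)
    have hlt : (-k).val < n := ZMod.val_lt _
    refine ⟨(-k).val - 1, by omega, ?_⟩
    have h1 : ((-k).val - 1 + 1 : ℕ) = (-k).val := by omega
    have h2 : (((-k).val : ℕ) : ZMod n) = -k := ZMod.natCast_rightInverse _
    have h3 : (((-k).val - 1 : ℕ) : ZMod n) = -k - 1 := by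
      rw [Nat.cast_sub (by omega), h2, Nat.cast_one]
    rw [h1, h2, h3]
    have h4 : -(-k - 1) = k + 1 := by ring
    have h5 : -(-k) = k := neg_neg k
    rw [h4, h5]
    exact Sym2.eq_swap

lemma cycle_adj_iff {V : Type*} {N : ℕ} (hN : 3 ≤ N) {w : ZMod N → V}
    (hw : Function.Injective w) (i : ZMod N) (x : V) :
    (SimpleGraph.fromEdgeSet (cycleEdges N w)).Adj (w i) x ↔ x = w (i - 1) ∨ x = w (i + 1) := by
  have hone : (1 : ZMod N) ≠ 0 := by
    have := natCast_ne_zero_zmod (n := N) (a := 1) (by omega) (by omega)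
    simpa using this
  rw [SimpleGraph.fromEdgeSet_adj]
  constructor
  · rintro ⟨⟨j, hj⟩, hne⟩
    rw [Sym2.eq_iff] at hj
    rcases hj with ⟨h1, h2⟩ | ⟨h1, h2⟩
    · right; rw [h2, hw h1]
    · left; rw [h2]; congr 1
      have := hw h1
      rw [this]; ring
  · rintro (rfl | rfl)
    · refine ⟨⟨i - 1, ?_⟩, fun hc => hone ?_⟩
      · rw [sub_add_cancel]; exact Sym2.eq_swap
      · have : i = i - 1 := hw hc
        linear_combination this
    · refine ⟨⟨i, rfl⟩, fun hc => hone ?_⟩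
      have : i = i + 1 := hw hc
      linear_combination -this

lemma cycle_nbhd {V : Type*} {N : ℕ} (hN : 3 ≤ N) {w : ZMod N → V}
    (hw : Function.Injective w) (i : ZMod N) :
    {x | (SimpleGraph.fromEdgeSet (cycleEdges N w)).Adj (w i) x}.ncard = 2 := by
  have hset : {x | (SimpleGraph.fromEdgeSet (cycleEdges N w)).Adj (w i) x} =
      {w (i - 1), w (i + 1)} := by
    ext x
    rw [Set.mem_setOf_eq, cycle_adj_iff hN hw]
    simp
  rw [hset]
  refine Set.ncard_pair (fun hc => ?_)
  have h2 : (2 : ZMod N) ≠ 0 := by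
    have := natCast_ne_zero_zmod (n := N) (a := 2) (by omega) (by omega)
    simpa using this
  have := hw hc
  apply h2
  linear_combination -this

lemma cycle_reach {V : Type*} {N : ℕ} (hN : 3 ≤ N) {w : ZMod N → V}
    (hw : Function.Injective w) (i : ZMod N) :
    {x | (SimpleGraph.fromEdgeSet (cycleEdges N w)).Reachable (w i) x} = Set.range w := by
  haveI : NeZero N := ⟨by omega⟩
  haveI : Fact (1 < N) := ⟨by omega⟩
  ext x
  simp only [Set.mem_setOf_eq]
  constructor
  · intro hx
    obtain ⟨p⟩ := hx
    have aux : ∀ (a y : V), (SimpleGraph.fromEdgeSet (cycleEdges N w)).Walk a y →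
        a ∈ Set.range w → y ∈ Set.range w := by
      intro a y p
      induction p with
      | nil => exact id
      | @cons a b c h p ih =>
        intro _
        apply ih
        rw [SimpleGraph.fromEdgeSet_adj] at h
        exact (cycleEdges_mem_range h.1).2
    exact aux _ _ p ⟨i, rfl⟩
  · rintro ⟨j, rfl⟩
    have key : ∀ k : ℕ, (SimpleGraph.fromEdgeSet (cycleEdges N w)).Reachable (w i) (w (i + k)) := by
      intro k
      induction k with
      | zero => simpa using SimpleGraph.Reachable.refl _
      | succ k ih =>
        refine ih.trans (SimpleGraph.Adj.reachable ?_)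
        rw [cycle_adj_iff hN hw]
        right
        congr 1
        push_cast
        ring
    have := key (j - i).val
    rwa [ZMod.natCast_rightInverse _, add_sub_cancel] at this
def glueF {V : Type*} {n₁ n₂ n₃ : ℕ} (v₁ : ZMod n₁ → V) (v₂ : ZMod n₂ → V)
    (v₃ : ZMod n₃ → V) (m : ℕ) : V :=
  if m < n₁ then v₁ (-(m : ZMod n₁))
  else if m < n₁ + n₂ then v₂ (-((m - n₁ : ℕ) : ZMod n₂))
  else v₃ (-((m - (n₁ + n₂) : ℕ) : ZMod n₃))

lemma neg_cast_sub_one {n : ℕ} (hn : 1 ≤ n) : -(((n - 1 : ℕ)) : ZMod n) = 1 := by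
  rw [Nat.cast_sub hn, Nat.cast_one, ZMod.natCast_self]
  ring

lemma main_aux {V : Type*} (n₁ n₂ n₃ : ℕ)
    (hn₁ : 3 ≤ n₁) (hn₂ : 3 ≤ n₂) (hn₃ : 3 ≤ n₃)
    (v₁ : ZMod n₁ → V) (v₂ : ZMod n₂ → V) (v₃ : ZMod n₃ → V)
    (hv₁ : Function.Injective v₁) (hv₂ : Function.Injective v₂)
    (hv₃ : Function.Injective v₃)
    (hd₁₂ : Disjoint (Set.range v₁) (Set.range v₂))
    (hd₁₃ : Disjoint (Set.range v₁) (Set.range v₃))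
    (hd₂₃ : Disjoint (Set.range v₂) (Set.range v₃)) :
    ∃ (N : ℕ) (w : ZMod N → V), 3 ≤ N ∧ Function.Injective w ∧
      Set.range w = Set.range v₁ ∪ Set.range v₂ ∪ Set.range v₃ ∧
      cycleEdges N w = symmDiff (cycleEdges n₁ v₁ ∪ cycleEdges n₂ v₂ ∪ cycleEdges n₃ v₃)
        {s(v₁ 0, v₁ 1), s(v₁ 1, v₂ 0), s(v₂ 0, v₂ 1), s(v₂ 1, v₃ 0), s(v₃ 0, v₃ 1),
          s(v₃ 1, v₁ 0)} := by
  set N := n₁ + n₂ + n₃ with hNdef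
  have hN : 3 ≤ N := by omega
  haveI : NeZero N := ⟨by omega⟩
  haveI : Fact (1 < N) := ⟨by omega⟩
  haveI : NeZero n₁ := ⟨by omega⟩
  haveI : NeZero n₂ := ⟨by omega⟩
  haveI : NeZero n₃ := ⟨by omega⟩
  set f : ℕ → V := glueF v₁ v₂ v₃ with hfdef
  set w : ZMod N → V := fun i => f i.val with hwdef
  -- basic values of f
  have hf1 : ∀ m, m < n₁ → f m = v₁ (-(m : ZMod n₁)) := by
    intro m hm; simp only [hfdef, glueF, if_pos hm]
  have hf2 : ∀ m, n₁ ≤ m → m < n₁ + n₂ → f m = v₂ (-((m - n₁ : ℕ) : ZMod n₂)) := by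
    intro m hm hm'
    simp only [hfdef, glueF]
    rw [if_neg (by omega : ¬ m < n₁), if_pos hm']
  have hf3 : ∀ m, n₁ + n₂ ≤ m → f m = v₃ (-((m - (n₁ + n₂) : ℕ) : ZMod n₃)) := by
    intro m hm
    simp only [hfdef, glueF]
    rw [if_neg (by omega : ¬ m < n₁), if_neg (by omega : ¬ m < n₁ + n₂)]
  have hf0 : f 0 = v₁ 0 := by rw [hf1 0 (by omega)]; norm_num
  have hfa : f (n₁ - 1) = v₁ 1 := by
    rw [hf1 (n₁ - 1) (by omega), neg_cast_sub_one (by omega)]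
  have hfb : f n₁ = v₂ 0 := by
    rw [hf2 n₁ (by omega) (by omega)]; simp
  have hfc : f (n₁ + n₂ - 1) = v₂ 1 := by
    rw [hf2 (n₁ + n₂ - 1) (by omega) (by omega)]
    have : n₁ + n₂ - 1 - n₁ = n₂ - 1 := by omega
    rw [this, neg_cast_sub_one (by omega)]
  have hfd : f (n₁ + n₂) = v₃ 0 := by
    rw [hf3 (n₁ + n₂) (by omega)]; simp
  have hfe : f (N - 1) = v₃ 1 := by
    rw [hf3 (N - 1) (by omega)]
    have : N - 1 - (n₁ + n₂) = n₃ - 1 := by omega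
    rw [this, neg_cast_sub_one (by omega)]
  -- membership helpers
  have hwval : ∀ m : ℕ, m < N → w ((m : ZMod N)) = f m := by
    intro m hm
    simp only [hwdef, ZMod.val_cast_of_lt hm]
  have hmem : ∀ m : ℕ, m + 1 < N → s(f m, f (m + 1)) ∈ cycleEdges N w := by
    intro m hm
    refine ⟨(m : ZMod N), ?_⟩
    rw [hwval m (by omega)]
    have : ((m : ZMod N) + 1) = ((m + 1 : ℕ) : ZMod N) := by push_cast; ring
    rw [this, hwval (m + 1) hm]
  have hwrap : s(f (N - 1), f 0) ∈ cycleEdges N w := by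
    refine ⟨((N - 1 : ℕ) : ZMod N), ?_⟩
    rw [hwval (N - 1) (by omega)]
    have : (((N - 1 : ℕ) : ZMod N) + 1) = 0 := by
      have : (((N - 1 : ℕ) : ZMod N) + 1) = ((N - 1 + 1 : ℕ) : ZMod N) := by push_cast; ring
      rw [this]
      have : N - 1 + 1 = N := by omega
      rw [this, ZMod.natCast_self]
    rw [this]
    have : (0 : ZMod N) = ((0 : ℕ) : ZMod N) := by norm_num
    rw [this, hwval 0 (by omega)]
  have hdecomp : ∀ e ∈ cycleEdges N w,
      (∃ m : ℕ, m + 1 < N ∧ e = s(f m, f (m + 1))) ∨ e = s(f (N - 1), f 0) := by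
    rintro e ⟨i, rfl⟩
    have hvi : i.val < N := ZMod.val_lt i
    have hval1 : (1 : ZMod N).val = 1 := ZMod.val_one N
    by_cases hc : i.val + 1 < N
    · left
      refine ⟨i.val, hc, ?_⟩
      have : (i + 1).val = i.val + 1 := by
        rw [ZMod.val_add, hval1, Nat.mod_eq_of_lt hc]
      simp only [hwdef, this]
    · right
      have hie : i.val = N - 1 := by omega
      have : (i + 1).val = 0 := by
        rw [ZMod.val_add, hval1, hie]
        have : N - 1 + 1 = N := by omega
        rw [this, Nat.mod_self]
      simp only [hwdef, this, hie]
  -- characterization of the big cycle edges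
  have hb1 := Set.ext_iff.mp (cycle_block (show 0 < n₁ by omega) v₁)
  have hb2 := Set.ext_iff.mp (cycle_block (show 0 < n₂ by omega) v₂)
  have hb3 := Set.ext_iff.mp (cycle_block (show 0 < n₃ by omega) v₃)
  have hiff1 : ∀ e : Sym2 V, e ∈ cycleEdges N w ↔
      ((∃ k : ZMod n₁, k ≠ 0 ∧ e = s(v₁ k, v₁ (k + 1))) ∨
       (∃ k : ZMod n₂, k ≠ 0 ∧ e = s(v₂ k, v₂ (k + 1))) ∨
       (∃ k : ZMod n₃, k ≠ 0 ∧ e = s(v₃ k, v₃ (k + 1))) ∨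
       e = s(v₁ 1, v₂ 0) ∨ e = s(v₂ 1, v₃ 0) ∨ e = s(v₃ 1, v₁ 0)) := by
    intro e
    constructor
    · intro he
      rcases hdecomp e he with ⟨m, hm, rfl⟩ | rfl
      · by_cases hc1 : m + 1 < n₁
        · refine Or.inl ((hb1 _).mp ⟨m, hc1, ?_⟩)
          rw [hf1 m (by omega), hf1 (m + 1) hc1]
        by_cases hc2 : m + 1 = n₁
        · have hm' : m = n₁ - 1 := by omega
          rw [hm', hfa]
          have : n₁ - 1 + 1 = n₁ := by omega
          rw [this, hfb]
          exact Or.inr (Or.inr (Or.inr (Or.inl rfl)))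
        by_cases hc3 : m + 1 < n₁ + n₂
        · refine Or.inr (Or.inl ((hb2 _).mp ⟨m - n₁, by omega, ?_⟩))
          rw [hf2 m (by omega) (by omega), hf2 (m + 1) (by omega) hc3]
          have h1 : m + 1 - n₁ = m - n₁ + 1 := by omega
          rw [h1]
        by_cases hc4 : m + 1 = n₁ + n₂
        · have hm' : m = n₁ + n₂ - 1 := by omega
          rw [hm', hfc]
          have : n₁ + n₂ - 1 + 1 = n₁ + n₂ := by omega
          rw [this, hfd]
          exact Or.inr (Or.inr (Or.inr (Or.inr (Or.inl rfl))))
        · refine Or.inr (Or.inr (Or.inl ((hb3 _).mp ⟨m - (n₁ + n₂), by omega, ?_⟩)))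
          rw [hf3 m (by omega), hf3 (m + 1) (by omega)]
          have h1 : m + 1 - (n₁ + n₂) = m - (n₁ + n₂) + 1 := by omega
          rw [h1]
      · rw [hfe, hf0]
        exact Or.inr (Or.inr (Or.inr (Or.inr (Or.inr rfl))))
    · rintro (h | h | h | rfl | rfl | rfl)
      · obtain ⟨m, hm, he⟩ := (hb1 _).mpr h
        rw [he, ← hf1 m (by omega), ← hf1 (m + 1) hm]
        exact hmem m (by omega)
      · obtain ⟨m, hm, he⟩ := (hb2 _).mpr h
        have h1 : f (n₁ + m) = v₂ (-(m : ZMod n₂)) := by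
          rw [hf2 (n₁ + m) (by omega) (by omega)]
          have : n₁ + m - n₁ = m := by omega
          rw [this]
        have h2 : f (n₁ + m + 1) = v₂ (-((m + 1 : ℕ) : ZMod n₂)) := by
          rw [hf2 (n₁ + m + 1) (by omega) (by omega)]
          have : n₁ + m + 1 - n₁ = m + 1 := by omega
          rw [this]
        rw [he, ← h1, ← h2]
        exact hmem (n₁ + m) (by omega)
      · obtain ⟨m, hm, he⟩ := (hb3 _).mpr h
        have h1 : f (n₁ + n₂ + m) = v₃ (-(m : ZMod n₃)) := by
          rw [hf3 (n₁ + n₂ + m) (by omega)]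
          have : n₁ + n₂ + m - (n₁ + n₂) = m := by omega
          rw [this]
        have h2 : f (n₁ + n₂ + m + 1) = v₃ (-((m + 1 : ℕ) : ZMod n₃)) := by
          rw [hf3 (n₁ + n₂ + m + 1) (by omega)]
          have : n₁ + n₂ + m + 1 - (n₁ + n₂) = m + 1 := by omega
          rw [this]
        rw [he, ← h1, ← h2]
        exact hmem (n₁ + n₂ + m) (by omega)
      · rw [← hfa, ← hfb]
        have h1 : n₁ = n₁ - 1 + 1 := by omega
        rw [h1]
        exact hmem (n₁ - 1) (by omega)
      · rw [← hfc, ← hfd]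
        have h1 : n₁ + n₂ = n₁ + n₂ - 1 + 1 := by omega
        rw [h1]
        exact hmem (n₁ + n₂ - 1) (by omega)
      · rw [← hfe, ← hf0]
        exact hwrap
  -- disjointness helpers
  have hr12 : ∀ (a : ZMod n₁) (b : ZMod n₂), v₁ a ≠ v₂ b := fun a b hc =>
    Set.disjoint_left.mp hd₁₂ ⟨a, rfl⟩ ⟨b, hc.symm⟩
  have hr13 : ∀ (a : ZMod n₁) (b : ZMod n₃), v₁ a ≠ v₃ b := fun a b hc =>
    Set.disjoint_left.mp hd₁₃ ⟨a, rfl⟩ ⟨b, hc.symm⟩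
  have hr23 : ∀ (a : ZMod n₂) (b : ZMod n₃), v₂ a ≠ v₃ b := fun a b hc =>
    Set.disjoint_left.mp hd₂₃ ⟨a, rfl⟩ ⟨b, hc.symm⟩
  have hgen : ∀ (a b c d : V), c ≠ a → c ≠ b → s(a, b) ≠ s(c, d) := by
    intro a b c d h1 h2 hc
    rw [Sym2.eq_iff] at hc
    rcases hc with ⟨e1, e2⟩ | ⟨e1, e2⟩
    · exact h1 e1.symm
    · exact h2 e2.symm
  have hgen' : ∀ (a b c d : V), d ≠ a → d ≠ b → s(a, b) ≠ s(c, d) := by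
    intro a b c d h1 h2 hc
    rw [Sym2.eq_iff] at hc
    rcases hc with ⟨e1, e2⟩ | ⟨e1, e2⟩
    · exact h2 e2.symm
    · exact h1 e1.symm
  have hne1 : ∀ k : ZMod n₁, k ≠ 0 → s(v₁ k, v₁ (k + 1)) ≠ s(v₁ 0, v₁ 1) := by
    intro k hk hc
    rw [Sym2.eq_iff] at hc
    rcases hc with ⟨h1, h2⟩ | ⟨h1, h2⟩
    · exact hk (hv₁ h1)
    · have e1 : k = 1 := hv₁ h1
      have e2 : k + 1 = 0 := hv₁ h2
      apply natCast_ne_zero_zmod (show 0 < 2 by omega) (show 2 < n₁ by omega)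
      push_cast
      rw [e1] at e2
      linear_combination e2
  have hne2 : ∀ k : ZMod n₂, k ≠ 0 → s(v₂ k, v₂ (k + 1)) ≠ s(v₂ 0, v₂ 1) := by
    intro k hk hc
    rw [Sym2.eq_iff] at hc
    rcases hc with ⟨h1, h2⟩ | ⟨h1, h2⟩
    · exact hk (hv₂ h1)
    · have e1 : k = 1 := hv₂ h1
      have e2 : k + 1 = 0 := hv₂ h2
      apply natCast_ne_zero_zmod (show 0 < 2 by omega) (show 2 < n₂ by omega)
      push_cast
      rw [e1] at e2
      linear_combination e2
  have hne3 : ∀ k : ZMod n₃, k ≠ 0 → s(v₃ k, v₃ (k + 1)) ≠ s(v₃ 0, v₃ 1) := by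
    intro k hk hc
    rw [Sym2.eq_iff] at hc
    rcases hc with ⟨h1, h2⟩ | ⟨h1, h2⟩
    · exact hk (hv₃ h1)
    · have e1 : k = 1 := hv₃ h1
      have e2 : k + 1 = 0 := hv₃ h2
      apply natCast_ne_zero_zmod (show 0 < 2 by omega) (show 2 < n₃ by omega)
      push_cast
      rw [e1] at e2
      linear_combination e2
  have hiff2 : ∀ e : Sym2 V,
      e ∈ symmDiff (cycleEdges n₁ v₁ ∪ cycleEdges n₂ v₂ ∪ cycleEdges n₃ v₃)
        {s(v₁ 0, v₁ 1), s(v₁ 1, v₂ 0), s(v₂ 0, v₂ 1), s(v₂ 1, v₃ 0), s(v₃ 0, v₃ 1),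
          s(v₃ 1, v₁ 0)} ↔
      ((∃ k : ZMod n₁, k ≠ 0 ∧ e = s(v₁ k, v₁ (k + 1))) ∨
       (∃ k : ZMod n₂, k ≠ 0 ∧ e = s(v₂ k, v₂ (k + 1))) ∨
       (∃ k : ZMod n₃, k ≠ 0 ∧ e = s(v₃ k, v₃ (k + 1))) ∨
       e = s(v₁ 1, v₂ 0) ∨ e = s(v₂ 1, v₃ 0) ∨ e = s(v₃ 1, v₁ 0)) := by
    intro e
    rw [Set.mem_symmDiff]
    simp only [Set.mem_union, Set.mem_insert_iff, Set.mem_singleton_iff]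
    constructor
    · rintro (⟨hA, hB⟩ | ⟨hB, hA⟩)
      · push_neg at hB
        obtain ⟨hB1, hB2, hB3, hB4, hB5, hB6⟩ := hB
        rcases hA with (⟨i, rfl⟩ | ⟨i, rfl⟩) | ⟨i, rfl⟩
        · by_cases hi : i = 0
          · exact absurd (by rw [hi, zero_add]) hB1
          · exact Or.inl ⟨i, hi, rfl⟩
        · by_cases hi : i = 0
          · exact absurd (by rw [hi, zero_add]) hB3
          · exact Or.inr (Or.inl ⟨i, hi, rfl⟩)
        · by_cases hi : i = 0
          · exact absurd (by rw [hi, zero_add]) hB5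
          · exact Or.inr (Or.inr (Or.inl ⟨i, hi, rfl⟩))
      · push_neg at hA
        obtain ⟨⟨hA1, hA2⟩, hA3⟩ := hA
        rcases hB with rfl | rfl | rfl | rfl | rfl | rfl
        · exact absurd ⟨0, by rw [zero_add]⟩ hA1
        · exact Or.inr (Or.inr (Or.inr (Or.inl rfl)))
        · exact absurd ⟨0, by rw [zero_add]⟩ hA2
        · exact Or.inr (Or.inr (Or.inr (Or.inr (Or.inl rfl))))
        · exact absurd ⟨0, by rw [zero_add]⟩ hA3
        · exact Or.inr (Or.inr (Or.inr (Or.inr (Or.inr rfl))))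
    · rintro (⟨k, hk, rfl⟩ | ⟨k, hk, rfl⟩ | ⟨k, hk, rfl⟩ | rfl | rfl | rfl)
      · refine Or.inl ⟨Or.inl (Or.inl ⟨k, rfl⟩), ?_⟩
        push_neg
        exact ⟨hne1 k hk,
          hgen' _ _ _ _ (Ne.symm (hr12 k 0)) (Ne.symm (hr12 (k + 1) 0)),
          hgen _ _ _ _ (Ne.symm (hr12 k 0)) (Ne.symm (hr12 (k + 1) 0)),
          hgen _ _ _ _ (Ne.symm (hr12 k 1)) (Ne.symm (hr12 (k + 1) 1)),
          hgen _ _ _ _ (Ne.symm (hr13 k 0)) (Ne.symm (hr13 (k + 1) 0)),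
          hgen _ _ _ _ (Ne.symm (hr13 k 1)) (Ne.symm (hr13 (k + 1) 1))⟩
      · refine Or.inl ⟨Or.inl (Or.inr ⟨k, rfl⟩), ?_⟩
        push_neg
        exact ⟨hgen _ _ _ _ (hr12 0 k) (hr12 0 (k + 1)),
          hgen _ _ _ _ (hr12 1 k) (hr12 1 (k + 1)),
          hne2 k hk,
          hgen' _ _ _ _ (Ne.symm (hr23 k 0)) (Ne.symm (hr23 (k + 1) 0)),
          hgen _ _ _ _ (Ne.symm (hr23 k 0)) (Ne.symm (hr23 (k + 1) 0)),
          hgen _ _ _ _ (Ne.symm (hr23 k 1)) (Ne.symm (hr23 (k + 1) 1))⟩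
      · refine Or.inl ⟨Or.inr ⟨k, rfl⟩, ?_⟩
        push_neg
        exact ⟨hgen _ _ _ _ (hr13 0 k) (hr13 0 (k + 1)),
          hgen _ _ _ _ (hr13 1 k) (hr13 1 (k + 1)),
          hgen _ _ _ _ (hr23 0 k) (hr23 0 (k + 1)),
          hgen _ _ _ _ (hr23 1 k) (hr23 1 (k + 1)),
          hne3 k hk,
          hgen' _ _ _ _ (hr13 0 k) (hr13 0 (k + 1))⟩
      · refine Or.inr ⟨Or.inr (Or.inl rfl), ?_⟩
        rintro ((hc | hc) | hc)
        · obtain ⟨a, ha⟩ := (cycleEdges_mem_range hc).2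
          exact hr12 a 0 ha
        · obtain ⟨a, ha⟩ := (cycleEdges_mem_range hc).1
          exact hr12 1 a ha.symm
        · obtain ⟨a, ha⟩ := (cycleEdges_mem_range hc).1
          exact hr13 1 a ha.symm
      · refine Or.inr ⟨Or.inr (Or.inr (Or.inr (Or.inl rfl))), ?_⟩
        rintro ((hc | hc) | hc)
        · obtain ⟨a, ha⟩ := (cycleEdges_mem_range hc).1
          exact hr12 a 1 ha
        · obtain ⟨a, ha⟩ := (cycleEdges_mem_range hc).2
          exact hr23 a 0 ha
        · obtain ⟨a, ha⟩ := (cycleEdges_mem_range hc).1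
          exact hr23 1 a ha.symm
      · refine Or.inr ⟨Or.inr (Or.inr (Or.inr (Or.inr (Or.inr rfl)))), ?_⟩
        rintro ((hc | hc) | hc)
        · obtain ⟨a, ha⟩ := (cycleEdges_mem_range hc).1
          exact hr13 a 1 ha
        · obtain ⟨a, ha⟩ := (cycleEdges_mem_range hc).1
          exact hr23 a 1 ha
        · obtain ⟨a, ha⟩ := (cycleEdges_mem_range hc).2
          exact hr13 0 a ha.symm
  -- injectivity of w
  have hfinj : ∀ m m', m < N → m' < N → f m = f m' → m = m' := by
    intro m m' hm hm' heq
    rcases (show m < n₁ ∨ (n₁ ≤ m ∧ m < n₁ + n₂) ∨ n₁ + n₂ ≤ m by omega) with c | ⟨c, c'⟩ | c <;>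
      rcases (show m' < n₁ ∨ (n₁ ≤ m' ∧ m' < n₁ + n₂) ∨ n₁ + n₂ ≤ m' by omega) with d | ⟨d, d'⟩ | d
    · rw [hf1 m c, hf1 m' d] at heq
      exact natCast_inj_zmod c d (neg_inj.mp (hv₁ heq))
    · rw [hf1 m c, hf2 m' d d'] at heq
      exact absurd heq (hr12 _ _)
    · rw [hf1 m c, hf3 m' d] at heq
      exact absurd heq (hr13 _ _)
    · rw [hf2 m c c', hf1 m' d] at heq
      exact absurd heq.symm (hr12 _ _)
    · rw [hf2 m c c', hf2 m' d d'] at heq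
      have := natCast_inj_zmod (show m - n₁ < n₂ by omega) (show m' - n₁ < n₂ by omega)
        (neg_inj.mp (hv₂ heq))
      omega
    · rw [hf2 m c c', hf3 m' d] at heq
      exact absurd heq (hr23 _ _)
    · rw [hf3 m c, hf1 m' d] at heq
      exact absurd heq.symm (hr13 _ _)
    · rw [hf3 m c, hf2 m' d d'] at heq
      exact absurd heq.symm (hr23 _ _)
    · rw [hf3 m c, hf3 m' d] at heq
      have := natCast_inj_zmod (show m - (n₁ + n₂) < n₃ by omega)
        (show m' - (n₁ + n₂) < n₃ by omega) (neg_inj.mp (hv₃ heq))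
      omega
  have hwinj : Function.Injective w := by
    intro i j hij
    have hv : i.val = j.val := hfinj i.val j.val (ZMod.val_lt i) (ZMod.val_lt j) hij
    have h2 : ((i.val : ℕ) : ZMod N) = ((j.val : ℕ) : ZMod N) := by rw [hv]
    rwa [ZMod.natCast_rightInverse i, ZMod.natCast_rightInverse j] at h2
  have hrange : Set.range w = Set.range v₁ ∪ Set.range v₂ ∪ Set.range v₃ := by
    ext u
    constructor
    · rintro ⟨i, rfl⟩
      have hvi : i.val < N := ZMod.val_lt i
      rcases (show i.val < n₁ ∨ (n₁ ≤ i.val ∧ i.val < n₁ + n₂) ∨ n₁ + n₂ ≤ i.val by omega) with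
        c | ⟨c, c'⟩ | c
      · exact Or.inl (Or.inl ⟨_, (hf1 i.val c).symm⟩)
      · exact Or.inl (Or.inr ⟨_, (hf2 i.val c c').symm⟩)
      · exact Or.inr ⟨_, (hf3 i.val c).symm⟩
    · rintro ((⟨j, rfl⟩ | ⟨j, rfl⟩) | ⟨j, rfl⟩)
      · refine ⟨((((-j).val : ℕ)) : ZMod N), ?_⟩
        have hlt := ZMod.val_lt (-j)
        rw [hwval _ (by omega), hf1 _ hlt, ZMod.natCast_rightInverse, neg_neg]
      · refine ⟨(((n₁ + (-j).val : ℕ)) : ZMod N), ?_⟩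
        have hlt := ZMod.val_lt (-j)
        rw [hwval _ (by omega), hf2 _ (by omega) (by omega)]
        have he : n₁ + (-j).val - n₁ = (-j).val := by omega
        rw [he, ZMod.natCast_rightInverse, neg_neg]
      · refine ⟨(((n₁ + n₂ + (-j).val : ℕ)) : ZMod N), ?_⟩
        have hlt := ZMod.val_lt (-j)
        rw [hwval _ (by omega), hf3 _ (by omega)]
        have he : n₁ + n₂ + (-j).val - (n₁ + n₂) = (-j).val := by omega
        rw [he, ZMod.natCast_rightInverse, neg_neg]
  exact ⟨N, w, hN, hwinj, hrange, Set.ext fun e => (hiff1 e).trans (hiff2 e).symm⟩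

theorem six_cycle_switch_joins_three_cycles {V : Type*} (n₁ n₂ n₃ : ℕ)
    (hn₁ : 3 ≤ n₁) (hn₂ : 3 ≤ n₂) (hn₃ : 3 ≤ n₃)
    (v₁ : ZMod n₁ → V) (v₂ : ZMod n₂ → V) (v₃ : ZMod n₃ → V)
    (hv₁ : Function.Injective v₁) (hv₂ : Function.Injective v₂)
    (hv₃ : Function.Injective v₃)
    (hd₁₂ : Disjoint (Set.range v₁) (Set.range v₂))
    (hd₁₃ : Disjoint (Set.range v₁) (Set.range v₃))
    (hd₂₃ : Disjoint (Set.range v₂) (Set.range v₃))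
    (x₁ y₁ x₂ y₂ x₃ y₃ : V)
    (he₁ : s(x₁, y₁) ∈ cycleEdges n₁ v₁)
    (he₂ : s(x₂, y₂) ∈ cycleEdges n₂ v₂)
    (he₃ : s(x₃, y₃) ∈ cycleEdges n₃ v₃)
    (E' : Set (Sym2 V))
    (hE' : E' = symmDiff (cycleEdges n₁ v₁ ∪ cycleEdges n₂ v₂ ∪ cycleEdges n₃ v₃)
      {s(x₁, y₁), s(y₁, x₂), s(x₂, y₂), s(y₂, x₃), s(x₃, y₃), s(y₃, x₁)}) :
    ∀ u ∈ Set.range v₁ ∪ Set.range v₂ ∪ Set.range v₃,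
      {w | (SimpleGraph.fromEdgeSet E').Adj u w}.ncard = 2 ∧
      {w | (SimpleGraph.fromEdgeSet E').Reachable u w} =
        Set.range v₁ ∪ Set.range v₂ ∪ Set.range v₃ := by
  obtain ⟨u₁, hc1, hr1, hi1, hx1, hy1⟩ := exists_reparam he₁
  obtain ⟨u₂, hc2, hr2, hi2, hx2, hy2⟩ := exists_reparam he₂
  obtain ⟨u₃, hc3, hr3, hi3, hx3, hy3⟩ := exists_reparam he₃
  obtain ⟨N, w, hN, hwinj, hrange, hedges⟩ :=
    main_aux n₁ n₂ n₃ hn₁ hn₂ hn₃ u₁ u₂ u₃ (hi1 hv₁) (hi2 hv₂) (hi3 hv₃)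
      (by rw [hr1, hr2]; exact hd₁₂) (by rw [hr1, hr3]; exact hd₁₃)
      (by rw [hr2, hr3]; exact hd₂₃)
  rw [hc1, hc2, hc3, hx1, hy1, hx2, hy2, hx3, hy3] at hedges
  rw [hr1, hr2, hr3] at hrange
  have hE'' : E' = cycleEdges N w := by rw [hE', ← hedges]
  intro u hu
  rw [← hrange] at hu
  obtain ⟨i, rfl⟩ := hu
  rw [hE'']
  exact ⟨cycle_nbhd hN hwinj i, (cycle_reach hN hwinj i).trans hrange⟩
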